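/- Let $\lambda, \mu \in \mathbb{N}^n$ with $\lambda \preceq \mu$ in the modified Bruhat order. Then $l(\lambda) \ge l(\mu)$, where $l(\nu)$ denotes the length of $\nu$, i.e., the maximal index $m$ with $\nu_m \ne 0$ (and $l(0) = 0$). -/

import Mathlib

/-- An element `t_τ ∘ u` of the extended affine Weyl group `W = Sₙ ⋉ ℤⁿ`
of type `A_{n-1}`:  `perm` is the finite part `u ∈ Sₙ`, `tr` the translation `τ`. -/
structure AffW (n : ℕ) where
  perm : Equiv.Perm (Fin n)
  tr : Fin n → ℤ

namespace AffW

variable {n : ℕ}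

/-- The affine action on `X = ℤⁿ` : `(t_τ u)(x) = u·x + τ` where `(u·x)_i = x_{u⁻¹ i}`. -/
def act (w : AffW n) (x : Fin n → ℤ) : Fin n → ℤ :=
  fun i => x (w.perm⁻¹ i) + w.tr i

/-- Group multiplication (composition of affine maps). -/
def mul (a b : AffW n) : AffW n :=
  ⟨a.perm * b.perm, fun i => b.tr (a.perm⁻¹ i) + a.tr i⟩

def one (n : ℕ) : AffW n := ⟨1, 0⟩

/-- An affine root `ε_i - ε_j + k`, recorded as the data `(i, j, k)`. -/
abbrev Root (n : ℕ) := Fin n × Fin n × ℤ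

/-- A positive affine root: `Δ⁺ = Δ_f⁺ ∪ (Δ_f + ℤ_{>0})`. -/
def IsPos (α : Root n) : Prop := 0 < α.2.2 ∨ (α.2.2 = 0 ∧ α.1 < α.2.1)

/-- A negative affine root. -/
def IsNeg (α : Root n) : Prop := IsPos (α.2.1, α.1, -α.2.2)

/-- Action of `w` on affine roots, determined by `(wα)(x) = α(w⁻¹x)`. -/
def rootAct (w : AffW n) (α : Root n) : Root n :=
  (w.perm α.1, w.perm α.2.1, α.2.2 - w.tr (w.perm α.1) + w.tr (w.perm α.2.1))

/-- The length `ℓ(w) = #{α ∈ Δ⁺ ∣ wα ∈ -Δ⁺}`. -/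
noncomputable def len (w : AffW n) : ℕ :=
  Set.ncard {α : Root n | IsPos α ∧ IsNeg (rootAct w α)}

/-- The affine reflection `s_{ε_i - ε_j + k}` as an element of `W`. -/
def refl (i j : Fin n) (k : ℤ) : AffW n :=
  ⟨Equiv.swap i j, fun m => if m = i then -k else if m = j then k else 0⟩

/-- Bruhat covering-type relation: right multiplication by a reflection which
increases the length. -/
def BruhatStep (a b : AffW n) : Prop :=
  (∃ i j k, i ≠ j ∧ b = mul a (refl i j k)) ∧ len a < len b

/-- The Bruhat order on the extended affine Weyl group. -/
def BruhatLe : AffW n → AffW n → Prop := Relation.ReflTransGen BruhatStep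

/-- `m_τ`, the shortest element of the coset `t_τ Sₙ`. -/
noncomputable def minRep (τ : Fin n → ℤ) : AffW n :=
  ⟨(Finset.exists_min_image (Finset.univ : Finset (Equiv.Perm (Fin n)))
      (fun u => len (⟨u, τ⟩ : AffW n)) ⟨1, Finset.mem_univ 1⟩).choose, τ⟩

/-- The Bruhat order on `X = ℤⁿ` induced from the extended affine Weyl group:
`τ ≤ η ↔ m_τ ≤ m_η`. -/
noncomputable def XLe (τ η : Fin n → ℤ) : Prop := BruhatLe (minRep τ) (minRep η)

end AffW

/-- The length `l(ν)` of a composition: the largest (1-based) index of a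
nonzero entry, with `l(0) = 0`. -/
def compLen {n : ℕ} (ν : Fin n → ℕ) : ℕ :=
  (Finset.univ.filter (fun i : Fin n => ν i ≠ 0)).sup (fun i => (i : ℕ) + 1)

/-!
Read a root `(x, y, l)` as the pair of integers `x < y + n l` (up to a common shift by `n`), and
`w` as the affine permutation `r + n q ↦ window w r + n q` of `ℤ`; then `theta` is the distance
between the two integers and `w` inverts the root exactly when `theta (rootAct w α) < 0`.

If `β > 0` but `aβ < 0`, the involution `γ ↦ -s_β γ` of the inversion set `N(s_β)` fixes `β`
and sends every root of `N(s_β) \ N(a)` into `N(a)`, so `ℓ(a s_β) < ℓ(a)`. Hence in every Bruhat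
step `a < a s_β` one may take `β > 0` and `aβ > 0`: the step moves the larger of two values of `a`
to the earlier position, which can only increase the rank `#{z ≤ P | J ≤ w z}`. For `w = m_{-ν}`,
`P = n - 1` and `J = p` this rank is `#{c ≥ p | ν c = 0}`, which attains its maximum `#{c ≥ p}`
exactly when `l(ν) ≤ p`.
-/

theorem finite_preimage_natCast_mul_Icc {n : ℕ} (hn : n ≠ 0) (a b : ℤ) :
    ((n : ℤ) * ·) ⁻¹' Set.Icc a b |>.Finite :=
  (Set.finite_Icc a b).preimage (mul_right_injective₀ (by exact_mod_cast hn)).injOn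

namespace AffW

variable {n : ℕ}

def theta (α : Root n) : ℤ := (α.2.1 : ℤ) - α.1 + n * α.2.2

theorem theta_eq_zero_iff (α : Root n) : theta α = 0 ↔ α.1 = α.2.1 ∧ α.2.2 = 0 := by
  obtain ⟨x, y, l⟩ := α
  have hx := x.isLt
  have hy := y.isLt
  simp only [theta, Fin.ext_iff]
  constructor
  · intro h
    obtain rfl : l = 0 := by
      by_contra hl
      rcases lt_or_gt_of_ne hl with hl | hl <;> nlinarith
    omega
  · rintro ⟨hxy, rfl⟩
    omega

theorem isPos_iff (α : Root n) : IsPos α ↔ 0 < theta α := by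
  obtain ⟨x, y, l⟩ := α
  have hx := x.isLt
  have hy := y.isLt
  simp only [IsPos, theta, Fin.lt_def]
  rcases lt_trichotomy l 0 with hl | rfl | hl
  · have : (n : ℤ) * l ≤ -n := by nlinarith
    omega
  · omega
  · have : (n : ℤ) ≤ n * l := by nlinarith
    omega

def negRoot (α : Root n) : Root n := (α.2.1, α.1, -α.2.2)

theorem negRoot_negRoot (α : Root n) : negRoot (negRoot α) = α := by
  simp [negRoot]

theorem theta_negRoot (α : Root n) : theta (negRoot α) = -theta α := by
  simp only [theta, negRoot]
  ring

theorem isNeg_iff (α : Root n) : IsNeg α ↔ theta α < 0 := by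
  rw [IsNeg, isPos_iff, ← neg_pos, ← theta_negRoot]
  rfl

def window (w : AffW n) (r : Fin n) : ℤ := (w.perm r : ℤ) + n * w.tr (w.perm r)

theorem theta_rootAct (w : AffW n) (α : Root n) :
    theta (rootAct w α) = window w α.2.1 - window w α.1 + n * α.2.2 := by
  simp only [theta, rootAct, window]
  ring

theorem theta_rootAct_eq_zero_iff (w : AffW n) (α : Root n) :
    theta (rootAct w α) = 0 ↔ theta α = 0 := by
  obtain ⟨x, y, l⟩ := α
  simp only [theta_eq_zero_iff, rootAct, w.perm.injective.eq_iff]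
  constructor <;> rintro ⟨rfl, h⟩ <;> simpa using h

theorem rootAct_one (α : Root n) : rootAct (one n) α = α := by
  simp [rootAct, one]

theorem rootAct_mul (a b : AffW n) (α : Root n) :
    rootAct (mul a b) α = rootAct a (rootAct b α) := by
  simp only [rootAct, mul, Equiv.Perm.mul_apply, Equiv.Perm.inv_def, Equiv.symm_apply_apply,
    Prod.mk.injEq, true_and]
  ring

theorem rootAct_negRoot (w : AffW n) (α : Root n) :
    rootAct w (negRoot α) = negRoot (rootAct w α) := by
  simp only [rootAct, negRoot, Prod.mk.injEq, true_and]
  ring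

/-- `coroot i j r = ⟨ε_r, ε_i - ε_j⟩`. -/
def coroot (i j r : Fin n) : ℤ := if r = i then 1 else if r = j then -1 else 0

section Reflection

variable {i j : Fin n}

theorem window_mul_refl (hij : i ≠ j) (k : ℤ) (w : AffW n) (r : Fin n) :
    window (mul w (refl i j k)) r = window w r + coroot i j r * theta (rootAct w (i, j, k)) := by
  rw [theta_rootAct]
  rcases eq_or_ne r i with rfl | hri
  · simp [window, mul, refl, coroot, hij.symm]
    ring
  rcases eq_or_ne r j with rfl | hrj
  · simp [window, mul, refl, coroot, hri]
    ring
  · simp [window, mul, refl, coroot, hri, hrj, Equiv.swap_apply_of_ne_of_ne hri hrj]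

theorem theta_rootAct_mul_refl (hij : i ≠ j) (k : ℤ) (w : AffW n) (γ : Root n) :
    theta (rootAct (mul w (refl i j k)) γ) = theta (rootAct w γ) -
      (coroot i j γ.1 - coroot i j γ.2.1) * theta (rootAct w (i, j, k)) := by
  simp only [theta_rootAct, window_mul_refl hij k]
  ring

theorem theta_rootAct_refl (hij : i ≠ j) (k : ℤ) (γ : Root n) :
    theta (rootAct (refl i j k) γ) =
      theta γ - (coroot i j γ.1 - coroot i j γ.2.1) * theta (i, j, k) := by
  simpa only [rootAct_mul, rootAct_one] using theta_rootAct_mul_refl hij k (one n) γ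

theorem rootAct_refl_self (hij : i ≠ j) (k : ℤ) :
    rootAct (refl i j k) (i, j, k) = negRoot (i, j, k) := by
  simp [rootAct, refl, negRoot, hij.symm]

theorem rootAct_refl_involutive (hij : i ≠ j) (k : ℤ) :
    Function.Involutive (rootAct (refl i j k)) := by
  have hswap : ∀ r, (refl i j k).tr (Equiv.swap i j r) = -(refl i j k).tr r := by
    intro r
    rcases eq_or_ne r i with rfl | hri
    · simp [refl, hij.symm]
    rcases eq_or_ne r j with rfl | hrj
    · simp [refl, hij.symm]
    · simp [refl, hri, hrj, Equiv.swap_apply_of_ne_of_ne hri hrj]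
  have hperm : (refl i j k).perm = Equiv.swap i j := rfl
  rintro ⟨x, y, l⟩
  simp only [rootAct, hperm, Equiv.swap_apply_self, hswap, Prod.mk.injEq, true_and]
  ring

theorem refl_comm (hij : i ≠ j) (k : ℤ) : refl i j k = refl j i (-k) := by
  simp only [refl, Equiv.swap_comm, neg_neg, AffW.mk.injEq, true_and]
  funext m
  split_ifs <;> simp_all

end Reflection

def invSet (w : AffW n) : Set (Root n) := {α | 0 < theta α ∧ theta (rootAct w α) < 0}

theorem len_eq_ncard_invSet (w : AffW n) : len w = (invSet w).ncard := by
  simp only [len, invSet, isPos_iff, isNeg_iff]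

theorem invSet_finite (w : AffW n) : (invSet w).Finite := by
  refine (Set.finite_iUnion fun x : Fin n => Set.finite_iUnion fun y : Fin n =>
    (finite_preimage_natCast_mul_Icc x.pos.ne' (x - y) (window w x - window w y)).image
      fun l => ((x, y, l) : Root n)).subset ?_
  rintro ⟨x, y, l⟩ ⟨hpos, hneg⟩
  simp only [theta] at hpos
  rw [theta_rootAct] at hneg
  simp only [Set.mem_iUnion, Set.mem_image, Set.mem_preimage, Set.mem_Icc]
  exact ⟨x, y, l, ⟨by linarith, by linarith⟩, rfl⟩

theorem ncard_invSet_mul_le (a t : AffW n) (ht : Function.Involutive (rootAct t)) :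
    (invSet (mul a t)).ncard ≤
      (invSet a \ invSet t).ncard + (invSet t \ invSet a).ncard := by
  have hcover : invSet (mul a t) ⊆
      rootAct t '' (invSet a \ invSet t) ∪ (negRoot ∘ rootAct t) '' (invSet t \ invSet a) := by
    rintro γ ⟨hγ, haγ⟩
    rw [rootAct_mul] at haγ
    rcases lt_trichotomy (theta (rootAct t γ)) 0 with hneg | hzero | hpos
    · refine Or.inr ⟨negRoot (rootAct t γ), ⟨⟨?_, ?_⟩, fun hS => ?_⟩, ?_⟩
      · rw [theta_negRoot]
        linarith
      · rw [rootAct_negRoot, ht, theta_negRoot]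
        linarith
      · have := hS.2
        rw [rootAct_negRoot, theta_negRoot] at this
        linarith
      · rw [Function.comp_apply, rootAct_negRoot, negRoot_negRoot, ht]
    · exact absurd ((theta_rootAct_eq_zero_iff t γ).1 hzero) hγ.ne'
    · refine Or.inl ⟨rootAct t γ, ⟨⟨hpos, haγ⟩, fun hT => ?_⟩, ht γ⟩
      have := hT.2
      rw [ht] at this
      linarith
  calc (invSet (mul a t)).ncard
      ≤ (rootAct t '' (invSet a \ invSet t) ∪
          (negRoot ∘ rootAct t) '' (invSet t \ invSet a)).ncard :=
        Set.ncard_le_ncard hcover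
          (((invSet_finite a).sdiff.image _).union ((invSet_finite t).sdiff.image _))
    _ ≤ (rootAct t '' (invSet a \ invSet t)).ncard +
          ((negRoot ∘ rootAct t) '' (invSet t \ invSet a)).ncard := Set.ncard_union_le _ _
    _ ≤ _ := add_le_add (Set.ncard_image_le (invSet_finite a).sdiff)
          (Set.ncard_image_le (invSet_finite t).sdiff)

theorem len_mul_refl_lt {a : AffW n} {i j : Fin n} (hij : i ≠ j) {k : ℤ}
    (hβ : 0 < theta (i, j, k)) (haβ : theta (rootAct a (i, j, k)) < 0) :
    len (mul a (refl i j k)) < len a := by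
  have ht := rootAct_refl_involutive hij k
  obtain ⟨σ, hσ_def⟩ : ∃ σ : Root n → Root n, ∀ γ, σ γ = negRoot (rootAct (refl i j k) γ) :=
    ⟨_, fun _ => rfl⟩
  have hσ : Function.Involutive σ := fun γ => by
    rw [hσ_def, hσ_def, rootAct_negRoot, negRoot_negRoot, ht]
  have hσβ : σ (i, j, k) = (i, j, k) := by
    rw [hσ_def, rootAct_refl_self hij, negRoot_negRoot]
  have hβS : (i, j, k) ∈ invSet a := ⟨hβ, haβ⟩
  have hβT : (i, j, k) ∈ invSet (refl i j k) :=
    ⟨hβ, by rw [rootAct_refl_self hij, theta_negRoot]; linarith⟩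
  -- `σ γ = c β - γ` with `c = ⟨γ, β^∨⟩ > 0`, so `aβ < 0 ≤ aγ` forces `a (σ γ) < 0`.
  have hmaps : ∀ γ ∈ invSet (refl i j k) \ invSet a,
      σ γ ∈ (invSet a ∩ invSet (refl i j k)) \ {(i, j, k)} := by
    rintro γ ⟨⟨hγ, htγ⟩, hγS⟩
    have hσγ : 0 < theta (σ γ) := by
      rw [hσ_def, theta_negRoot]
      linarith
    have htσγ : theta (rootAct (refl i j k) (σ γ)) < 0 := by
      rw [hσ_def, rootAct_negRoot, ht, theta_negRoot]
      linarith
    have hc : 0 < coroot i j γ.1 - coroot i j γ.2.1 := by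
      rw [theta_rootAct_refl hij] at htγ
      exact pos_of_mul_pos_left (by linarith) hβ.le
    have haγ : 0 ≤ theta (rootAct a γ) := not_lt.1 fun h => hγS ⟨hγ, h⟩
    have haσγ : theta (rootAct a (σ γ)) < 0 := by
      rw [hσ_def, rootAct_negRoot, theta_negRoot, ← rootAct_mul, theta_rootAct_mul_refl hij]
      nlinarith
    refine ⟨⟨⟨hσγ, haσγ⟩, hσγ, htσγ⟩, fun hβ' => hγS ?_⟩
    rw [← hσ γ, Set.mem_singleton_iff.1 hβ', hσβ]
    exact hβS
  have hST : (invSet a ∩ invSet (refl i j k)).Finite := (invSet_finite a).inter_of_left _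
  have h₁ := Set.ncard_le_ncard_of_injOn σ hmaps hσ.injective.injOn hST.sdiff
  have h₂ := Set.ncard_sdiff_singleton_add_one (Set.mem_inter hβS hβT) hST
  have h₃ := Set.ncard_inter_add_ncard_sdiff_eq_ncard (invSet a) (invSet (refl i j k))
    (invSet_finite a)
  have h₄ := ncard_invSet_mul_le a (refl i j k) ht
  rw [len_eq_ncard_invSet, len_eq_ncard_invSet]
  omega

theorem exists_refl_of_bruhatStep {a b : AffW n} (h : BruhatStep a b) :
    ∃ i j k, i ≠ j ∧ b = mul a (refl i j k) ∧
      0 < theta (i, j, k) ∧ 0 < theta (rootAct a (i, j, k)) := by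
  obtain ⟨⟨i, j, k, hij, rfl⟩, hlen⟩ := h
  have hup : ∀ {i' j' k'}, i' ≠ j' → refl i' j' k' = refl i j k → 0 < theta (i', j', k') →
      0 < theta (rootAct a (i', j', k')) := by
    intro i' j' k' hij' hrefl hβ
    refine lt_of_le_of_ne (not_lt.1 fun haβ => ?_) (Ne.symm ?_)
    · have := len_mul_refl_lt hij' hβ haβ
      rw [hrefl] at this
      omega
    · rw [Ne, theta_rootAct_eq_zero_iff, theta_eq_zero_iff]
      exact fun h => hij' h.1
  rcases lt_or_gt_of_ne fun h => hij ((theta_eq_zero_iff (i, j, k)).1 h).1 with hβ | hβ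
  · have hβ' : 0 < theta (j, i, -k) := by
      have := theta_negRoot (i, j, k)
      simp only [negRoot] at this
      linarith
    exact ⟨j, i, -k, hij.symm, by rw [← refl_comm hij], hβ',
      hup hij.symm (refl_comm hij k).symm hβ'⟩
  · exact ⟨i, j, k, hij, rfl, hβ, hup hij rfl hβ⟩

/-- `{z ≤ P | J ≤ w z}`, with `z = r + n q` recorded as `(r, q)`. -/
def rankSet (w : AffW n) (P J : ℤ) : Set (Fin n × ℤ) :=
  {z | (z.1 : ℤ) + n * z.2 ≤ P ∧ J ≤ window w z.1 + n * z.2}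

theorem rankSet_finite (w : AffW n) (P J : ℤ) : (rankSet w P J).Finite := by
  refine (Set.finite_iUnion fun r : Fin n =>
    (finite_preimage_natCast_mul_Icc r.pos.ne' (J - window w r) (P - r)).image
      fun q => (r, q)).subset ?_
  rintro ⟨r, q⟩ ⟨hP, hJ⟩
  simp only [Set.mem_iUnion, Set.mem_image, Set.mem_preimage, Set.mem_Icc]
  exact ⟨r, q, ⟨by linarith, by linarith⟩, rfl⟩

theorem ncard_rankSet_le_mul_refl {a : AffW n} {i j : Fin n} (hij : i ≠ j) {k : ℤ}
    (hβ : 0 < theta (i, j, k)) (haβ : 0 < theta (rootAct a (i, j, k))) (P J : ℤ) :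
    (rankSet a P J).ncard ≤ (rankSet (mul a (refl i j k)) P J).ncard := by
  have hw := window_mul_refl hij k a
  rw [theta_rootAct] at haβ hw
  simp only [theta] at hβ
  -- Only the values at residue `j` decrease; each is found again at residue `i`, `θ β` earlier.
  have hj : ∀ z ∈ rankSet a P J \ rankSet (mul a (refl i j k)) P J, z.1 = j := by
    rintro ⟨r, q⟩ ⟨⟨hP, hJ⟩, hb⟩
    by_contra hr
    have hc : 0 ≤ coroot i j r := by
      simp only [coroot, hr, if_false]
      split_ifs <;> norm_num
    exact hb ⟨hP, by rw [hw]; nlinarith⟩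
  have hmaps : ∀ z ∈ rankSet a P J \ rankSet (mul a (refl i j k)) P J,
      ((i, z.2 - k) : Fin n × ℤ) ∈ rankSet (mul a (refl i j k)) P J \ rankSet a P J := by
    rintro ⟨r, q⟩ hz
    obtain rfl : r = j := hj _ hz
    obtain ⟨⟨hP, hJ⟩, hb⟩ := hz
    refine ⟨⟨by linarith, ?_⟩, fun ha => hb ⟨hP, ?_⟩⟩
    · simp only [hw, coroot, if_true]
      linarith
    · have := ha.2
      simp only [hw, coroot, hij.symm, if_true, if_false] at this ⊢
      linarith
  have hinj : Set.InjOn (fun z : Fin n × ℤ => ((i, z.2 - k) : Fin n × ℤ))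
      (rankSet a P J \ rankSet (mul a (refl i j k)) P J) := by
    rintro ⟨r₁, q₁⟩ h₁ ⟨r₂, q₂⟩ h₂ h
    simp only [Prod.mk.injEq, sub_left_inj, true_and] at h
    exact Prod.ext ((hj _ h₁).trans (hj _ h₂).symm) h
  rw [Set.ncard_le_ncard_iff_ncard_sdiff_le_ncard_sdiff (rankSet_finite _ _ _)
    (rankSet_finite _ _ _)]
  exact Set.ncard_le_ncard_of_injOn _ hmaps hinj (rankSet_finite _ _ _).sdiff

theorem ncard_rankSet_mono {a b : AffW n} (h : BruhatLe a b) (P J : ℤ) :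
    (rankSet a P J).ncard ≤ (rankSet b P J).ncard := by
  induction h with
  | refl => exact le_rfl
  | tail _ hstep ih =>
    obtain ⟨i, j, k, hij, rfl, hβ, haβ⟩ := exists_refl_of_bruhatStep hstep
    exact ih.trans (ncard_rankSet_le_mul_refl hij hβ haβ P J)

theorem ncard_rankSet_of_tr_eq_neg {w : AffW n} {ν : Fin n → ℕ}
    (hw : w.tr = fun c => -(ν c : ℤ)) (p : ℕ) :
    (rankSet w ((n : ℤ) - 1) p).ncard = {c : Fin n | p ≤ (c : ℕ) ∧ ν c = 0}.ncard := by
  have hset : rankSet w ((n : ℤ) - 1) p =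
      (fun r => (r, (0 : ℤ))) '' (w.perm ⁻¹' {c | p ≤ (c : ℕ) ∧ ν c = 0}) := by
    ext ⟨r, q⟩
    simp only [rankSet, window, hw, Set.mem_ofPred_eq, Set.mem_image, Set.mem_preimage,
      Prod.mk.injEq]
    have hr := r.isLt
    have hu := (w.perm r).isLt
    constructor
    · rintro ⟨hP, hJ⟩
      have hq : q ≤ 0 := by nlinarith
      have hνq : (ν (w.perm r) : ℤ) ≤ q := by nlinarith
      obtain ⟨rfl, hν⟩ : q = 0 ∧ ν (w.perm r) = 0 := by omega
      simp only [hν, Nat.cast_zero, neg_zero, mul_zero, add_zero] at hJ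
      exact ⟨r, ⟨by omega, hν⟩, rfl, rfl⟩
    · rintro ⟨r, ⟨hp, hν⟩, rfl, rfl⟩
      simp only [hν]
      omega
  rw [hset, Set.ncard_image_of_injective _ (Prod.mk_left_injective 0),
    Set.ncard_preimage_of_injective_subset_range w.perm.injective (by simp)]

end AffW

theorem compLen_le_iff {n : ℕ} {ν : Fin n → ℕ} {p : ℕ} :
    compLen ν ≤ p ↔ ∀ c : Fin n, p ≤ (c : ℕ) → ν c = 0 := by
  simp only [compLen, Finset.sup_le_iff, Finset.mem_filter, Finset.mem_univ, true_and]
  refine forall_congr' fun c => ?_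
  omega

open AffW in
/-- If `λ ⪯ μ` in the modified Bruhat order on `ℕⁿ`, then `l(λ) ≥ l(μ)`. -/
theorem compLen_antitone_of_prec (n : ℕ) (lam mu : Fin n → ℕ)
    (hle : XLe (fun i => -(lam i : ℤ)) (fun i => -(mu i : ℤ))) :
    compLen mu ≤ compLen lam := by
  set p := compLen lam
  have hlam : ∀ c : Fin n, p ≤ (c : ℕ) → lam c = 0 := compLen_le_iff.1 le_rfl
  have hrank := ncard_rankSet_mono hle ((n : ℤ) - 1) p
  rw [ncard_rankSet_of_tr_eq_neg rfl, ncard_rankSet_of_tr_eq_neg rfl] at hrank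
  have hmu : {c : Fin n | p ≤ (c : ℕ) ∧ mu c = 0} = {c : Fin n | p ≤ (c : ℕ)} := by
    refine Set.eq_of_subset_of_ncard_le (fun c hc => hc.1) ?_
    convert hrank using 2
    ext c
    exact ⟨fun hc => ⟨hc, hlam c hc⟩, And.left⟩
  refine compLen_le_iff.2 fun c hc => ?_
  exact (hmu ▸ hc : c ∈ {c : Fin n | p ≤ (c : ℕ) ∧ mu c = 0}).2
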